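/- Let k ≥ 2, let F ∈ Q_1([0,1]^3)^3 with Jacobian J, and let q ∈ Q_{k-1}([0,1]^3). Then each component of cof(J(x)) ∇q(x) is a polynomial in Q_k([0,1]^3), i.e. of degree at most k in each of the three variables. -/

import Mathlib

open MvPolynomial Matrix

/-- `p ∈ Q_m`: polynomial of degree at most `m` in each of the three variables. -/
def memQ3 (m : ℕ) (p : MvPolynomial (Fin 3) ℝ) : Prop :=
  ∀ i : Fin 3, degreeOf i p ≤ m

/-- `cof(J)∇q = ∂₁q (∂₂F × ∂₃F) + ∂₂q (∂₃F × ∂₁F) + ∂₃q (∂₁F × ∂₂F)`. -/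
noncomputable def cofGrad3 (F : Fin 3 → MvPolynomial (Fin 3) ℝ)
    (q : MvPolynomial (Fin 3) ℝ) : Fin 3 → MvPolynomial (Fin 3) ℝ :=
  pderiv 0 q • ((fun i => pderiv 1 (F i)) ⨯₃ (fun i => pderiv 2 (F i))) +
  pderiv 1 q • ((fun i => pderiv 2 (F i)) ⨯₃ (fun i => pderiv 0 (F i))) +
  pderiv 2 q • ((fun i => pderiv 0 (F i)) ⨯₃ (fun i => pderiv 1 (F i)))

namespace MvPolynomial

variable {σ R : Type*}

theorem degreeOf_pderiv_le [CommSemiring R] [DecidableEq σ] (i j : σ) (p : MvPolynomial σ R) :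
    degreeOf i (pderiv j p) ≤ degreeOf i p - if i = j then 1 else 0 := by
  refine degreeOf_le_iff.mpr fun m hm => ?_
  have hshift : m + Finsupp.single j 1 ∈ p.support := by
    rw [mem_support_iff, coeff_pderiv] at hm
    exact mem_support_iff.mpr (left_ne_zero_of_mul hm)
  have := monomial_le_degreeOf i hshift
  simp only [Finsupp.add_apply, Finsupp.single_apply, eq_comm (a := j)] at this
  omega

theorem degreeOf_pderiv_le_of_le [CommSemiring R] [DecidableEq σ] {i : σ} (j : σ)
    {p : MvPolynomial σ R} {n : ℕ} (h : degreeOf i p ≤ n) :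
    degreeOf i (pderiv j p) ≤ n - if i = j then 1 else 0 :=
  (degreeOf_pderiv_le i j p).trans (Nat.sub_le_sub_right h _)

theorem degreeOf_cross_apply_le [CommRing R] (i : σ) {u v : Fin 3 → MvPolynomial σ R} {m n : ℕ}
    (hu : ∀ a, degreeOf i (u a) ≤ m) (hv : ∀ b, degreeOf i (v b) ≤ n) (c : Fin 3) :
    degreeOf i ((u ⨯₃ v) c) ≤ m + n := by
  have hprod (a b : Fin 3) : degreeOf i (u a * v b) ≤ m + n :=
    (degreeOf_mul_le _ _ _).trans (add_le_add (hu a) (hv b))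
  rw [cross_apply]
  fin_cases c <;> exact (degreeOf_sub_le _ _ _).trans (max_le (hprod _ _) (hprod _ _))

end MvPolynomial

theorem stmt_6 (k : ℕ) (hk : 2 ≤ k)
    (F : Fin 3 → MvPolynomial (Fin 3) ℝ)
    (hF : ∀ i j : Fin 3, degreeOf j (F i) ≤ 1)
    (q : MvPolynomial (Fin 3) ℝ) (hq : memQ3 (k - 1) q) :
    ∀ i : Fin 3, memQ3 k (cofGrad3 F q i) := by
  intro c j
  have hterm (a b d : Fin 3) :
      degreeOf j (pderiv a q * ((fun i => pderiv b (F i)) ⨯₃ (fun i => pderiv d (F i))) c) ≤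
        (k - 1 - if j = a then 1 else 0) +
          ((1 - if j = b then 1 else 0) + (1 - if j = d then 1 else 0)) :=
    (degreeOf_mul_le _ _ _).trans <| add_le_add (degreeOf_pderiv_le_of_le a (hq j))
      (degreeOf_cross_apply_le j (fun i => degreeOf_pderiv_le_of_le b (hF i j))
        (fun i => degreeOf_pderiv_le_of_le d (hF i j)) c)
  simp only [cofGrad3, Pi.add_apply, Pi.smul_apply, smul_eq_mul]
  -- In each summand `(a, b, d)` is a permutation of the three directions, so exactly one of the
  -- three factors is differentiated in direction `j`; that cuts the bound `k + 1` down to `k`.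
  refine (degreeOf_add_le _ _ _).trans
    (max_le ((degreeOf_add_le _ _ _).trans (max_le ?_ ?_)) ?_) <;>
  refine (hterm _ _ _).trans ?_ <;>
  fin_cases j <;> simp only [Fin.zero_eta, Fin.mk_one, Fin.reduceFinMk, Fin.isValue, Fin.reduceEq,
    ↓reduceIte] <;> omega
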